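/- arXiv:2603.14089 — 6 statements merged into one kernel-verified Lean document; each statement's English description precedes it below -/
import Mathlib

section
/- Suppose Condition A holds. Then arg(k_z²) ∈ [−3π/4, −π/4], arg(k_z) ∈ [5π/8, 7π/8], Re(k_z) < 0, and Im(k_z) ≥ √((−2μεω₁ω₂/c² + μμ₀σω₁)/(2(√2 + 1))). -/
/-!
With `a = με/c²` and `b = μ₀μσ`, Condition A is what places `k_z² = a ω² - i b ω` in the
quarter plane `|Re k_z²| ≤ -Im k_z²` around the negative imaginary axis. The bound
`Re k_z² ≤ -Im k_z²` comes from `ω₁ - ω₂ ≥ √2 ω₁`; for `Im k_z² ≤ Re k_z²` the case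
`ω₁ + ω₂ < 0` uses `b ≤ 2aCω₁`, after which the lower bound `-(1 + φ(C)) ω₁` on `ω₂` is the
smaller root of the resulting quadratic. Everything about `k_z` then follows from
`Im k_z² = 2 Re k_z Im k_z`, `2 (Im k_z)² = |k_z²| - Re k_z²` and halving the argument.
-/

open Real

namespace Complex

theorem sq_re (z : ℂ) : (z ^ 2).re = z.re ^ 2 - z.im ^ 2 := by
  simp only [sq, mul_re]

theorem sq_im (z : ℂ) : (z ^ 2).im = 2 * z.re * z.im := by
  simp only [sq, mul_im]; ring

theorem arg_mem_Icc_of_abs_re_le_neg_im {z : ℂ} (him : z.im < 0) (hre : |z.re| ≤ -z.im) :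
    arg z ∈ Set.Icc (-(3 * π / 4)) (-(π / 4)) := by
  have hz : z ≠ 0 := fun h => by simp [h] at him
  have hnorm : 0 < ‖z‖ := norm_pos_iff.2 hz
  have hθ : -arg z ∈ Set.Icc 0 π :=
    ⟨by linarith [arg_neg_iff.2 him], by linarith [neg_pi_lt_arg z]⟩
  have hcos : |Real.cos (-arg z)| ≤ √2 / 2 := by
    rw [Real.cos_neg, cos_arg hz, abs_div, abs_norm, div_le_iff₀ hnorm]
    refine (abs_le_of_sq_le_sq' ?_ (by positivity)).2
    have hnorm_sq := sq_norm_sub_sq_re z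
    have hsqrt := sq_sqrt (zero_le_two (α := ℝ))
    nlinarith [sq_abs z.re, abs_nonneg z.re]
  have hcos_pi_div_four : Real.cos (π / 4) = √2 / 2 := cos_pi_div_four
  have hcos_three_pi_div_four : Real.cos (3 * π / 4) = -(√2 / 2) := by
    rw [show 3 * π / 4 = π - π / 4 by ring, Real.cos_pi_sub, cos_pi_div_four]
  have hπ := pi_pos
  have hlow := (strictAntiOn_cos.le_iff_ge hθ ⟨by positivity, by linarith⟩).1
    ((abs_le.1 hcos).2.trans hcos_pi_div_four.ge)
  have hup := (strictAntiOn_cos.le_iff_ge ⟨by positivity, by linarith⟩ hθ).1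
    (hcos_three_pi_div_four.le.trans (abs_le.1 hcos).1)
  exact ⟨by linarith, by linarith⟩

theorem arg_eq_arg_sq_div_two_add_pi {z : ℂ} (hre : z.re < 0) (him : 0 < z.im) :
    arg z = arg (z ^ 2) / 2 + π := by
  have hw : -z ≠ 0 := neg_ne_zero.2 fun h => by simp [h] at him
  have hw_im : (-z).im < 0 := by simpa using him
  have hlt : arg (-z) < 0 := arg_neg_iff.2 hw_im
  have hgt : -(π / 2) < arg (-z) := neg_pi_div_two_lt_arg_iff.2 (.inl (by simpa using hre))
  have hsq : arg (z ^ 2) = arg (-z) + arg (-z) := by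
    rw [show z ^ 2 = -z * -z by ring, arg_mul_eq_add_arg_iff hw hw]
    constructor <;> linarith
  have hneg : arg z = arg (-z) + π := by
    simpa using arg_neg_eq_arg_add_pi_of_im_neg hw_im
  rw [hsq, hneg]; ring

theorem re_neg_of_sq_im_neg {z : ℂ} (him : 0 < z.im) (hsq : (z ^ 2).im < 0) : z.re < 0 := by
  rw [sq_im] at hsq
  nlinarith

theorem sqrt_two_sub_one_mul_neg_im_le_norm_sub_re {w : ℂ} (him : w.im < 0)
    (hre : w.re ≤ -w.im) : (√2 - 1) * -w.im ≤ ‖w‖ - w.re := by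
  have hsq : (w.re + (√2 - 1) * -w.im) ^ 2 ≤ ‖w‖ ^ 2 := by
    have hnorm_sq := sq_norm_sub_sq_re w
    have hsqrt := sq_sqrt (zero_le_two (α := ℝ))
    nlinarith [mul_nonneg (neg_nonneg.2 him.le) (sub_nonneg.2 hre),
      one_lt_sqrt_two, sqrt_nonneg 2]
  linarith [(abs_le_of_sq_le_sq' hsq (norm_nonneg w)).2]

theorem sqrt_neg_sq_im_div_le_im {z : ℂ} (him : 0 < z.im) (hsq_im : (z ^ 2).im < 0)
    (hsq_re : (z ^ 2).re ≤ -(z ^ 2).im) :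
    √(-(z ^ 2).im / (2 * (√2 + 1))) ≤ z.im := by
  have htwo_im_sq : 2 * z.im ^ 2 = ‖z ^ 2‖ - (z ^ 2).re := by
    rw [norm_pow, sq_re, ← sq_norm_sub_sq_re z]; ring
  have hbound := sqrt_two_sub_one_mul_neg_im_le_norm_sub_re hsq_im hsq_re
  have hsqrt := sq_sqrt (zero_le_two (α := ℝ))
  have hle : -(z ^ 2).im / (2 * (√2 + 1)) ≤ z.im ^ 2 := by
    rw [div_le_iff₀ (by positivity)]
    nlinarith [sqrt_nonneg 2]
  simpa [sqrt_sq him.le] using sqrt_le_sqrt hle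

end Complex

def dispersion (a b : ℝ) (ω : ℂ) : ℂ := a * ω ^ 2 - Complex.I * b * ω

section dispersion

variable {a b C ω₁ ω₂ : ℝ}

theorem dispersion_re : (dispersion a b ⟨ω₁, ω₂⟩).re = a * (ω₁ ^ 2 - ω₂ ^ 2) + b * ω₂ := by
  simp [dispersion, sq]

theorem dispersion_im : (dispersion a b ⟨ω₁, ω₂⟩).im = 2 * a * ω₁ * ω₂ - b * ω₁ := by
  simp [dispersion, sq]; ring

theorem dispersion_im_neg (ha : 0 < a) (hb : 0 ≤ b) (hω₁ : 0 < ω₁)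
    (hup : ω₂ ≤ (1 - √2) * ω₁) : (dispersion a b ⟨ω₁, ω₂⟩).im < 0 := by
  have hω₂ : ω₂ < 0 := by nlinarith [one_lt_sqrt_two]
  rw [dispersion_im]
  nlinarith [mul_pos (mul_pos ha hω₁) (neg_pos.2 hω₂), mul_nonneg hb hω₁.le]

theorem dispersion_re_le_neg_im (ha : 0 < a) (hb : 0 ≤ b) (hω₁ : 0 < ω₁)
    (hup : ω₂ ≤ (1 - √2) * ω₁) :
    (dispersion a b ⟨ω₁, ω₂⟩).re ≤ -(dispersion a b ⟨ω₁, ω₂⟩).im := by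
  rw [dispersion_re, dispersion_im]
  have hsqrt := sq_sqrt (zero_le_two (α := ℝ))
  have hgap : √2 * ω₁ ≤ ω₁ - ω₂ := by linarith
  have hgap_sq : 2 * ω₁ ^ 2 ≤ (ω₁ - ω₂) ^ 2 := by
    nlinarith [pow_le_pow_left₀ (by positivity) hgap 2]
  nlinarith [mul_nonneg ha.le (sub_nonneg.2 hgap_sq),
    mul_nonneg hb ((by positivity : 0 ≤ √2 * ω₁).trans hgap)]

theorem dispersion_im_le_re (ha : 0 < a) (hb : 0 ≤ b) (hω₁ : 0 < ω₁)
    (hb_le : b ≤ 2 * a * C * ω₁) (hlow : -(1 + (√(2 + C ^ 2) - C)) * ω₁ ≤ ω₂)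
    (hup : ω₂ ≤ (1 - √2) * ω₁) :
    (dispersion a b ⟨ω₁, ω₂⟩).im ≤ (dispersion a b ⟨ω₁, ω₂⟩).re := by
  rw [dispersion_re, dispersion_im]
  have hsqrt := sq_sqrt (zero_le_two (α := ℝ))
  rcases le_or_gt 0 (ω₁ + ω₂) with hsum | hsum
  · have hgap : ω₁ + ω₂ ≤ √2 * ω₁ := by nlinarith [one_lt_sqrt_two]
    have hgap_sq : (ω₁ + ω₂) ^ 2 ≤ 2 * ω₁ ^ 2 := by
      nlinarith [pow_le_pow_left₀ hsum hgap 2]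
    nlinarith [mul_nonneg ha.le (sub_nonneg.2 hgap_sq), mul_nonneg hb hsum]
  · set s := √(2 + C ^ 2)
    have hs : s ^ 2 = 2 + C ^ 2 := sq_sqrt (by positivity)
    have hs_ge : √2 ≤ s := sqrt_le_sqrt (by nlinarith)
    -- `-(1 + s - C)` and `C - 1 + s` are the roots of `2 - (1 + t)² + 2C(1 + t)`, `t = ω₂/ω₁`
    have hroots : 0 ≤ (ω₂ + (1 + s - C) * ω₁) * ((C - 1 + s) * ω₁ - ω₂) :=
      mul_nonneg (by linarith) (by nlinarith [one_lt_sqrt_two])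
    have hexpand : (ω₂ + (1 + s - C) * ω₁) * ((C - 1 + s) * ω₁ - ω₂)
        = (1 + 2 * C) * ω₁ ^ 2 - ω₂ ^ 2 + (2 * C - 2) * ω₁ * ω₂ := by
      linear_combination ω₁ ^ 2 * hs
    rw [hexpand] at hroots
    nlinarith [mul_nonneg ha.le hroots,
      mul_nonneg (sub_nonneg.2 hb_le) (neg_nonneg.2 hsum.le)]

theorem abs_dispersion_re_le_neg_im (ha : 0 < a) (hb : 0 ≤ b) (hω₁ : 0 < ω₁)
    (hb_le : b ≤ 2 * a * C * ω₁) (hlow : -(1 + (√(2 + C ^ 2) - C)) * ω₁ ≤ ω₂)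
    (hup : ω₂ ≤ (1 - √2) * ω₁) :
    |(dispersion a b ⟨ω₁, ω₂⟩).re| ≤ -(dispersion a b ⟨ω₁, ω₂⟩).im :=
  abs_le.2 ⟨by linarith [dispersion_im_le_re ha hb hω₁ hb_le hlow hup],
    dispersion_re_le_neg_im ha hb hω₁ hup⟩

end dispersion

/-- With k_z² := μεω²/c² − iμ₀μσω for ω = ω₁ + iω₂ (ω₁ > 0, ε > 0, σ ≥ 0),
and k_z the square root of k_z² with positive imaginary part, suppose Condition A holds:
there exists C > 0 such that σ/ε ≤ 2Cω₁/(μ₀c²) and −(1+φ(C))ω₁ ≤ ω₂ ≤ (1−√2)ω₁ with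
φ(C) = √(2+C²) − C. Then arg(k_z²) ∈ [−3π/4, −π/4], arg(k_z) ∈ [5π/8, 7π/8],
Re(k_z) < 0, and Im(k_z) ≥ √((−2μεω₁ω₂/c² + μμ₀σω₁)/(2(√2 + 1))). -/
theorem stmt_1 (μ μ0 c ε σ : ℝ) (hμ : 0 < μ) (hμ0 : 0 < μ0) (hc : 0 < c)
    (hε : 0 < ε) (hσ : 0 ≤ σ)
    (ω1 ω2 : ℝ) (hω1 : 0 < ω1) (ω : ℂ) (hω : ω = Complex.mk ω1 ω2)
    (K : ℂ) (hK : K = (μ * ε / c ^ 2 : ℝ) * ω ^ 2 - Complex.I * (μ0 * μ * σ : ℝ) * ω)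
    (kz : ℂ) (hkz : kz ^ 2 = K) (hkzim : 0 < kz.im)
    (condA : ∃ C > (0 : ℝ), σ / ε ≤ 2 * C * ω1 / (μ0 * c ^ 2) ∧
      -(1 + (Real.sqrt (2 + C ^ 2) - C)) * ω1 ≤ ω2 ∧ ω2 ≤ (1 - Real.sqrt 2) * ω1) :
    Complex.arg K ∈ Set.Icc (-(3 * Real.pi / 4)) (-(Real.pi / 4)) ∧
      Complex.arg kz ∈ Set.Icc (5 * Real.pi / 8) (7 * Real.pi / 8) ∧
      kz.re < 0 ∧
      Real.sqrt ((-2 * μ * ε * ω1 * ω2 / c ^ 2 + μ * μ0 * σ * ω1) /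
        (2 * (Real.sqrt 2 + 1))) ≤ kz.im := by
  obtain ⟨C, hC, hσε, hlow, hup⟩ := condA
  have hb_le : μ0 * μ * σ ≤ 2 * (μ * ε / c ^ 2) * C * ω1 := by
    rw [div_le_div_iff₀ hε (by positivity)] at hσε
    rw [show 2 * (μ * ε / c ^ 2) * C * ω1 = 2 * C * ω1 * ε * μ / c ^ 2 by ring,
      le_div_iff₀ (by positivity)]
    nlinarith [mul_le_mul_of_nonneg_left hσε hμ.le]
  have ha : 0 < μ * ε / c ^ 2 := by positivity
  have hb : 0 ≤ μ0 * μ * σ := by positivity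
  have hK' : K = dispersion (μ * ε / c ^ 2) (μ0 * μ * σ) ⟨ω1, ω2⟩ := by rw [hK, hω]; rfl
  have him : (kz ^ 2).im < 0 := hkz ▸ hK' ▸ dispersion_im_neg ha hb hω1 hup
  have hre : |(kz ^ 2).re| ≤ -(kz ^ 2).im :=
    hkz ▸ hK' ▸ abs_dispersion_re_le_neg_im ha hb hω1 hb_le hlow hup
  have hargK := Complex.arg_mem_Icc_of_abs_re_le_neg_im him hre
  have hkzre := Complex.re_neg_of_sq_im_neg hkzim him
  refine ⟨hkz ▸ hargK, ?_, hkzre, ?_⟩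
  · rw [Complex.arg_eq_arg_sq_div_two_add_pi hkzre hkzim]
    constructor <;> linarith [hargK.1, hargK.2]
  · convert Complex.sqrt_neg_sq_im_div_le_im hkzim him (abs_le.1 hre).2 using 3
    rw [hkz, hK', dispersion_im]
    ring
end

section
/- Let L > 0, let ε : [0,L] → ℝ be continuous with ε > 0 and σ : [0,L] → ℝ continuous with σ ≥ 0, and let ω = ω₁ + iω₂ with ω₁ > 0 and ω₂ < 0. Set k_z²(z) = με(z)ω²/c² − iμ₀μσ(z)ω and let k_z(L) be the square root of k_z²(L) with positive imaginary part. Let 𝓔 : [0,L] → ℂ be a twice continuously differentiable solution of 𝓔'' + k_z²(z)𝓔 = 0 on [0,L] satisfying the radiation condition 𝓔'(L) − ik_z(L)𝓔(L) = 0 and 𝓔(L) ≠ 0. Then 𝓔(z) ≠ 0 for all z ∈ [0,L], and Im(𝓔'(z)/𝓔(z)) ≤ 0 for all z ∈ [0,L]. -/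
/-- Let L > 0, ε, σ : [0,L] → ℝ continuous with ε > 0, σ ≥ 0, and
ω = ω₁ + iω₂ with ω₁ > 0, ω₂ < 0. Set k_z²(z) = με(z)ω²/c² − iμ₀μσ(z)ω and let k_z(L)
be the square root of k_z²(L) with positive imaginary part. Let 𝓔 be a twice continuously
differentiable solution of 𝓔'' + k_z²(z)𝓔 = 0 on [0,L] with 𝓔'(L) − ik_z(L)𝓔(L) = 0 and
𝓔(L) ≠ 0. Then 𝓔(z) ≠ 0 and Im(𝓔'(z)/𝓔(z)) ≤ 0 for all z ∈ [0,L]. -/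
theorem stmt_2 (μ μ0 c L : ℝ) (hμ : 0 < μ) (hμ0 : 0 < μ0) (hc : 0 < c) (hL : 0 < L)
    (ε σ : ℝ → ℝ)
    (hεc : ContinuousOn ε (Set.Icc 0 L)) (hσc : ContinuousOn σ (Set.Icc 0 L))
    (hε : ∀ z ∈ Set.Icc (0 : ℝ) L, 0 < ε z) (hσ : ∀ z ∈ Set.Icc (0 : ℝ) L, 0 ≤ σ z)
    (ω1 ω2 : ℝ) (hω1 : 0 < ω1) (hω2 : ω2 < 0) (ω : ℂ) (hω : ω = Complex.mk ω1 ω2)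
    (K : ℝ → ℂ)
    (hK : ∀ z, K z = (μ * ε z / c ^ 2 : ℝ) * ω ^ 2 - Complex.I * (μ0 * μ * σ z : ℝ) * ω)
    (kzL : ℂ) (hkzL : kzL ^ 2 = K L) (hkzLim : 0 < kzL.im)
    (E E' E'' : ℝ → ℂ)
    (hE' : ∀ z ∈ Set.Icc (0 : ℝ) L, HasDerivWithinAt E (E' z) (Set.Icc 0 L) z)
    (hE'' : ∀ z ∈ Set.Icc (0 : ℝ) L, HasDerivWithinAt E' (E'' z) (Set.Icc 0 L) z)
    (hE''c : ContinuousOn E'' (Set.Icc 0 L))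
    (hode : ∀ z ∈ Set.Icc (0 : ℝ) L, E'' z + K z * E z = 0)
    (hrad : E' L - Complex.I * kzL * E L = 0)
    (hEL : E L ≠ 0) :
    ∀ z ∈ Set.Icc (0 : ℝ) L, E z ≠ 0 ∧ (E' z / E z).im ≤ 0 := by
  set S : Set ℝ := Set.Icc (0 : ℝ) L with hS
  set g : ℝ → ℝ := fun z => (E' z * (starRingEnd ℂ) (E z)).im with hg
  have hωre : ω.re = ω1 := by rw [hω]
  have hωim : ω.im = ω2 := by rw [hω]
  -- imaginary part of K is negative on S
  have hKimneg : ∀ z ∈ S, (K z).im < 0 := by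
    intro z hz
    have hKim : (K z).im = μ * ε z / c ^ 2 * (2 * ω1 * ω2) - μ0 * μ * σ z * ω1 := by
      rw [hK, pow_two ω]
      simp only [Complex.sub_im, Complex.mul_im, Complex.mul_re, Complex.ofReal_re,
        Complex.ofReal_im, Complex.I_re, Complex.I_im, hωre, hωim]
      ring
    rw [hKim]
    have h1 : 0 < μ * ε z / c ^ 2 := by
      have := hε z hz
      positivity
    have h2 : 0 ≤ μ0 * μ * σ z * ω1 := by
      have := hσ z hz
      positivity
    have h3 : 2 * ω1 * ω2 < 0 := by nlinarith
    linarith [mul_neg_of_pos_of_neg h1 h3]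
  -- derivative of g
  have hder : ∀ z ∈ S, HasDerivWithinAt g (-(K z).im * Complex.normSq (E z)) S z := by
    intro z hz
    have h1 : HasDerivWithinAt (fun z => E' z * (starRingEnd ℂ) (E z))
        (E'' z * (starRingEnd ℂ) (E z) + E' z * (starRingEnd ℂ) (E' z)) S z :=
      (hE'' z hz).mul ((hE' z hz).star)
    have h2 : HasDerivWithinAt g
        (Complex.imCLM (E'' z * (starRingEnd ℂ) (E z) + E' z * (starRingEnd ℂ) (E' z))) S z :=
      Complex.imCLM.hasFDerivAt.comp_hasDerivWithinAt z h1
    convert h2 using 1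
    have hE''eq : E'' z = -(K z * E z) := by
      have h := hode z hz
      linear_combination h
    rw [hE''eq]
    have hc1 : E z * (starRingEnd ℂ) (E z) = (Complex.normSq (E z) : ℂ) := Complex.mul_conj _
    have hc2 : E' z * (starRingEnd ℂ) (E' z) = (Complex.normSq (E' z) : ℂ) := Complex.mul_conj _
    have : -(K z * E z) * (starRingEnd ℂ) (E z) = -(K z * (Complex.normSq (E z) : ℂ)) := by
      rw [← hc1]; ring
    rw [this, hc2]
    simp [Complex.mul_im]
  have hgc : ContinuousOn g S := fun z hz => (hder z hz).continuousWithinAt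
  have hmono : MonotoneOn g S := by
    apply monotoneOn_of_hasDerivWithinAt_nonneg (convex_Icc 0 L) hgc
      (f' := fun z => -(K z).im * Complex.normSq (E z))
    · intro x hx
      exact (hder x (interior_subset hx)).mono interior_subset
    · intro x hx
      have h := hKimneg x (interior_subset hx)
      nlinarith [Complex.normSq_nonneg (E x)]
  have hLmem : L ∈ S := Set.mem_Icc.2 ⟨le_of_lt hL, le_refl L⟩
  -- value at L
  have hEL' : E' L = Complex.I * kzL * E L := by linear_combination hrad
  have hgL : g L = kzL.re * Complex.normSq (E L) := by
    have hc1 : E L * (starRingEnd ℂ) (E L) = (Complex.normSq (E L) : ℂ) := Complex.mul_conj _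
    have : E' L * (starRingEnd ℂ) (E L) = Complex.I * kzL * (Complex.normSq (E L) : ℂ) := by
      rw [hEL', ← hc1]; ring
    rw [hg]
    simp only [this]
    simp [Complex.mul_im, Complex.mul_re]
  have hre : kzL.re < 0 := by
    have h1 : (kzL ^ 2).im = (K L).im := by rw [hkzL]
    have h2 : (kzL ^ 2).im = 2 * kzL.re * kzL.im := by
      rw [pow_two, Complex.mul_im]; ring
    have h3 := hKimneg L hLmem
    nlinarith
  have hgLneg : g L < 0 := by
    rw [hgL]
    exact mul_neg_of_neg_of_pos hre (Complex.normSq_pos.2 hEL)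
  intro z hz
  have hgz : g z < 0 := lt_of_le_of_lt (hmono hz hLmem hz.2) hgLneg
  have hEz : E z ≠ 0 := by
    intro h
    rw [hg] at hgz
    simp [h] at hgz
  refine ⟨hEz, ?_⟩
  have him : (E' z / E z).im = g z / Complex.normSq (E z) := by
    rw [Complex.div_im, hg]
    simp [Complex.mul_im]
    ring
  rw [him]
  exact le_of_lt (div_neg_of_neg_of_pos hgz (Complex.normSq_pos.2 hEz))
end

section
/- Suppose Condition A holds. Then Im(k_z²) < 0 and −1 ≤ Re(k_z²)/Im(k_z²) ≤ 1. -/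
lemma stmt4_aux_le (a b ω1 ω2 : ℝ) (ha : 0 ≤ a) (hb : 0 ≤ b) (hu0 : 0 ≤ ω1 - ω2)
    (hu2 : 2 * ω1 ^ 2 ≤ (ω1 - ω2) ^ 2) :
    a * (ω1 ^ 2 - ω2 ^ 2) + b * ω2 ≤ -1 * (2 * a * ω1 * ω2 - b * ω1) := by
  nlinarith [mul_nonneg hb hu0, mul_le_mul_of_nonneg_left hu2 ha]

lemma stmt4_aux_ge1 (a b ω1 ω2 : ℝ) (ha : 0 ≤ a) (hb : 0 ≤ b) (hv0 : 0 ≤ ω1 + ω2)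
    (hv2 : (ω1 + ω2) ^ 2 ≤ 2 * ω1 ^ 2) :
    2 * a * ω1 * ω2 - b * ω1 ≤ a * (ω1 ^ 2 - ω2 ^ 2) + b * ω2 := by
  nlinarith [mul_nonneg hb hv0, mul_le_mul_of_nonneg_left hv2 ha]

lemma stmt4_aux_ge2 (a b C ω1 ω2 : ℝ) (ha : 0 ≤ a)
    (key : (-(ω1 + ω2)) ^ 2 + 2 * C * ω1 * (-(ω1 + ω2)) ≤ 2 * ω1 ^ 2)
    (hbs : b * (-(ω1 + ω2)) ≤ 2 * a * C * ω1 * (-(ω1 + ω2))) :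
    2 * a * ω1 * ω2 - b * ω1 ≤ a * (ω1 ^ 2 - ω2 ^ 2) + b * ω2 := by
  nlinarith [mul_le_mul_of_nonneg_left key ha, hbs]

set_option maxHeartbeats 1600000 in
/-- With k_z² := μεω²/c² − iμ₀μσω for ω = ω₁ + iω₂ (ω₁ > 0, ε > 0, σ ≥ 0),
suppose Condition A holds: there exists C > 0 such that σ/ε ≤ 2Cω₁/(μ₀c²) and
−(1+φ(C))ω₁ ≤ ω₂ ≤ (1−√2)ω₁ with φ(C) = √(2+C²) − C. Then Im(k_z²) < 0 and
−1 ≤ Re(k_z²)/Im(k_z²) ≤ 1. -/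
theorem stmt_4 (μ μ0 c ε σ : ℝ) (hμ : 0 < μ) (hμ0 : 0 < μ0) (hc : 0 < c)
    (hε : 0 < ε) (hσ : 0 ≤ σ)
    (ω1 ω2 : ℝ) (hω1 : 0 < ω1) (ω : ℂ) (hω : ω = Complex.mk ω1 ω2)
    (K : ℂ) (hK : K = (μ * ε / c ^ 2 : ℝ) * ω ^ 2 - Complex.I * (μ0 * μ * σ : ℝ) * ω)
    (condA : ∃ C > (0 : ℝ), σ / ε ≤ 2 * C * ω1 / (μ0 * c ^ 2) ∧
      -(1 + (Real.sqrt (2 + C ^ 2) - C)) * ω1 ≤ ω2 ∧ ω2 ≤ (1 - Real.sqrt 2) * ω1) :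
    K.im < 0 ∧ -1 ≤ K.re / K.im ∧ K.re / K.im ≤ 1 := by
  obtain ⟨C, hC, h1, h2, h3⟩ := condA
  obtain ⟨a, ha_def⟩ : ∃ x : ℝ, x = μ * ε / c ^ 2 := ⟨_, rfl⟩
  obtain ⟨b, hb_def⟩ : ∃ x : ℝ, x = μ0 * μ * σ := ⟨_, rfl⟩
  rw [← ha_def, ← hb_def] at hK
  have ha : 0 < a := ha_def ▸ by positivity
  have hb : 0 ≤ b := hb_def ▸ by positivity
  have hre : K.re = a * (ω1 ^ 2 - ω2 ^ 2) + b * ω2 := by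
    subst hK hω
    simp [Complex.mul_re, Complex.mul_im, pow_two]
    try ring
  have him : K.im = 2 * a * ω1 * ω2 - b * ω1 := by
    subst hK hω
    simp [Complex.mul_re, Complex.mul_im, pow_two]
    try ring
  -- b ≤ 2 a C ω1
  rw [div_le_div_iff₀ hε (by positivity)] at h1
  have hbC : b ≤ 2 * a * C * ω1 := by
    rw [ha_def, hb_def,
      show 2 * (μ * ε / c ^ 2) * C * ω1 = μ * (2 * C * ω1 * ε) / c ^ 2 by ring,
      le_div_iff₀ (by positivity : (0:ℝ) < c ^ 2)]
    nlinarith [mul_le_mul_of_nonneg_left h1 hμ.le]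
  have hs2 : Real.sqrt 2 ^ 2 = 2 := Real.sq_sqrt (by norm_num)
  have hs2n : (1:ℝ) < Real.sqrt 2 := by nlinarith [Real.sqrt_nonneg 2]
  have hφ : Real.sqrt (2 + C ^ 2) ^ 2 = 2 + C ^ 2 := Real.sq_sqrt (by positivity)
  have hφn : 0 ≤ Real.sqrt (2 + C ^ 2) := Real.sqrt_nonneg _
  have hsq : (Real.sqrt 2 * ω1) ^ 2 = 2 * ω1 ^ 2 := by rw [mul_pow, hs2]
  have hω2 : ω2 < 0 :=
    lt_of_le_of_lt h3 (by nlinarith [mul_pos (sub_pos.mpr hs2n) hω1])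
  have himneg : K.im < 0 := by
    rw [him]
    nlinarith [mul_pos (mul_pos ha hω1) (neg_pos.mpr hω2), mul_nonneg hb hω1.le]
  refine ⟨himneg, ?_, ?_⟩
  · -- Re ≤ -Im
    rw [le_div_iff_of_neg himneg, hre, him]
    have hu : Real.sqrt 2 * ω1 ≤ ω1 - ω2 := by nlinarith
    have hu0 : (0:ℝ) ≤ ω1 - ω2 := le_trans (by positivity) hu
    have hu2 : 2 * ω1 ^ 2 ≤ (ω1 - ω2) ^ 2 :=
      hsq ▸ pow_le_pow_left₀ (by positivity) hu 2
    exact stmt4_aux_le a b ω1 ω2 ha.le hb hu0 hu2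
  · -- Re ≥ Im
    rw [div_le_iff_of_neg himneg, hre, him, one_mul]
    rcases le_or_gt 0 (ω1 + ω2) with hcase | hcase
    · have hup : ω1 + ω2 ≤ Real.sqrt 2 * ω1 := by
        nlinarith [mul_nonneg (sub_nonneg.mpr hs2n.le) hω1.le]
      have hv2 : (ω1 + ω2) ^ 2 ≤ 2 * ω1 ^ 2 :=
        hsq ▸ pow_le_pow_left₀ hcase hup 2
      exact stmt4_aux_ge1 a b ω1 ω2 ha.le hb hcase hv2
    · have hs0 : 0 < -(ω1 + ω2) := by linarith
      have hsφ : -(ω1 + ω2) ≤ (Real.sqrt (2 + C ^ 2) - C) * ω1 := by nlinarith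
      have hφeq : ((Real.sqrt (2 + C ^ 2) - C) * ω1) ^ 2
          + 2 * C * ω1 * ((Real.sqrt (2 + C ^ 2) - C) * ω1) = 2 * ω1 ^ 2 := by
        linear_combination ω1 ^ 2 * hφ
      have hterm : 0 ≤ ((Real.sqrt (2 + C ^ 2) - C) * ω1 - -(ω1 + ω2))
          * ((Real.sqrt (2 + C ^ 2) - C) * ω1 + -(ω1 + ω2) + 2 * C * ω1) := by
        apply mul_nonneg (sub_nonneg.mpr hsφ)
        nlinarith [mul_pos hC hω1]
      have key : (-(ω1 + ω2)) ^ 2 + 2 * C * ω1 * (-(ω1 + ω2)) ≤ 2 * ω1 ^ 2 := by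
        nlinarith [hterm, hφeq]
      have hbs : b * (-(ω1 + ω2)) ≤ 2 * a * C * ω1 * (-(ω1 + ω2)) :=
        mul_le_mul_of_nonneg_right hbC hs0.le
      exact stmt4_aux_ge2 a b C ω1 ω2 ha.le key hbs
end

section
/- Let k ∈ ℂ with Re(k) < 0 and let w ∈ ℂ with w ≠ 1. If Re(k(1 + w)/(1 − w)) ≤ 0, then |w| ≤ |Im(k)/Re(k)| + √((Im(k)/Re(k))² + 1). -/
/-! Multiplying numerator and denominator by `1 - conj w` shows that
`Re (k (1 + w) / (1 - w)) ≤ 0` means `Re k (1 - |w|²) ≤ 2 Im k Im w`. Dividing by `Re k < 0` and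
bounding `Im w` by `|w|` gives `|w|² ≤ 2 t |w| + 1` with `t = |Im k / Re k|`, and `|w|` is then
at most the positive root `t + √(t² + 1)` of this quadratic. -/

open Complex

theorem Real.le_add_sqrt_of_sq_le {r t : ℝ} (h : r ^ 2 ≤ 2 * t * r + 1) :
    r ≤ t + √(t ^ 2 + 1) := by
  have : |r - t| ≤ √(t ^ 2 + 1) := Real.abs_le_sqrt (by nlinarith)
  linarith [le_abs_self (r - t)]

theorem Complex.re_mul_one_add_div_one_sub (k w : ℂ) :
    (k * (1 + w) / (1 - w)).re
      = (k.re * (1 - ‖w‖ ^ 2) - 2 * k.im * w.im) / normSq (1 - w) := by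
  rw [div_re, ← add_div, Complex.sq_norm, normSq_apply w]
  congr 1
  simp only [mul_re, mul_im, add_re, add_im, sub_re, sub_im, one_re, one_im]
  ring

theorem Complex.norm_sq_le_of_re_mul_one_sub_norm_sq_le {k w : ℂ} (hk : k.re < 0)
    (h : k.re * (1 - ‖w‖ ^ 2) ≤ 2 * k.im * w.im) :
    ‖w‖ ^ 2 ≤ 2 * |k.im / k.re| * ‖w‖ + 1 := by
  have hdiv : 2 * (k.im / k.re) * w.im ≤ 1 - ‖w‖ ^ 2 := by
    rw [mul_div_assoc', div_mul_eq_mul_div, div_le_iff_of_neg hk]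
    linarith
  have him : -(k.im / k.re * w.im) ≤ |k.im / k.re| * ‖w‖ :=
    calc -(k.im / k.re * w.im) ≤ |k.im / k.re * w.im| := neg_le_abs _
      _ = |k.im / k.re| * |w.im| := abs_mul _ _
      _ ≤ |k.im / k.re| * ‖w‖ := by gcongr; exact abs_im_le_norm w
  linarith

/-- Let k ∈ ℂ with Re(k) < 0 and let w ∈ ℂ with w ≠ 1. If
Re(k(1 + w)/(1 − w)) ≤ 0, then |w| ≤ |Im(k)/Re(k)| + √((Im(k)/Re(k))² + 1). -/
theorem stmt_7 (k w : ℂ) (hk : k.re < 0) (hw : w ≠ 1)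
    (h : (k * (1 + w) / (1 - w)).re ≤ 0) :
    ‖w‖ ≤ |k.im / k.re| + Real.sqrt ((k.im / k.re) ^ 2 + 1) := by
  have hd : 0 < normSq (1 - w) := normSq_pos.2 (sub_ne_zero.2 hw.symm)
  rw [re_mul_one_add_div_one_sub, div_le_iff₀ hd, zero_mul, sub_nonpos] at h
  rw [← sq_abs (k.im / k.re)]
  exact Real.le_add_sqrt_of_sq_le (norm_sq_le_of_re_mul_one_sub_norm_sq_le hk h)
end

section
/- Let k ∈ ℂ be nonzero with arg(k) ∈ [5π/8, 7π/8], and let w ∈ ℂ with w ≠ 1 satisfy Re(k(1 + w)/(1 − w)) ≤ 0. Then |w| ≤ c₀, where c₀ = tan(3π/8) + sec(3π/8). -/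
/-!
Multiplying the hypothesis by `|1 - w|²` turns it into the real inequality
`-Re k · (|w|² - 1) ≤ -2 Im k · Im w`. In the sector `arg k ∈ [π - α, π]` one has `Re k < 0` and
`|Im k| ≤ tan α · (-Re k)`, so `r = |w|` satisfies `r² ≤ 2 tan α · r + 1`, whose positive root is
`tan α + sec α`. Here `α = 3π/8`.
-/

open Real ComplexConjugate

namespace Complex

/-- Also true for `w = 0`, where `z / 0 = 0`. -/
lemma re_div_mul_normSq (z w : ℂ) : (z / w).re * normSq w = (z * conj w).re := by
  rcases eq_or_ne w 0 with rfl | hw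
  · simp
  · rw [div_re, ← add_div, div_mul_cancel₀ _ (normSq_pos.2 hw).ne']
    simp [mul_re]

lemma re_mul_one_add_div_one_sub_mul_normSq (k w : ℂ) :
    (k * (1 + w) / (1 - w)).re * normSq (1 - w) = k.re * (1 - ‖w‖ ^ 2) - 2 * k.im * w.im := by
  rw [re_div_mul_normSq, Complex.sq_norm, normSq_apply]
  simp only [mul_re, mul_im, add_re, add_im, sub_re, sub_im, one_re, one_im, conj_re, conj_im]
  ring

lemma re_neg_of_pi_div_two_lt_arg {z : ℂ} (h : π / 2 < arg z) : z.re < 0 := by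
  rw [← not_le, ← abs_arg_le_pi_div_two_iff, abs_le]
  exact fun h' ↦ h.not_ge h'.2

lemma abs_im_le_tan_mul_neg_re {z : ℂ} {α : ℝ} (hα : α < π / 2)
    (harg : π - α ≤ arg z) : |z.im| ≤ Real.tan α * -z.re := by
  have hre : z.re < 0 := re_neg_of_pi_div_two_lt_arg (by linarith)
  have him : 0 ≤ z.im := arg_nonneg_iff.1 (by linarith [pi_pos])
  have htan : Real.tan (-α) ≤ Real.tan (arg z - π) :=
    strictMonoOn_tan.monotoneOn ⟨by linarith, by linarith [arg_le_pi z]⟩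
      ⟨by linarith, by linarith [arg_le_pi z]⟩ (by linarith)
  rw [Real.tan_neg, Real.tan_sub_pi, tan_arg, le_div_iff_of_neg hre] at htan
  rw [abs_of_nonneg him]
  linarith

end Complex

lemma le_add_of_sq_le_two_mul_add_one {r t s : ℝ} (hs : 0 ≤ s) (hst : s ^ 2 = t ^ 2 + 1)
    (h : r ^ 2 ≤ 2 * t * r + 1) : r ≤ t + s := by
  nlinarith

lemma Real.one_div_cos_sq {x : ℝ} (hx : cos x ≠ 0) : (1 / cos x) ^ 2 = tan x ^ 2 + 1 := by
  rw [add_comm, ← inv_inv (1 + _), inv_one_add_tan_sq hx, one_div, inv_pow]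

theorem stmt_8_general (k : ℂ)
    (harg : Complex.arg k ∈ Set.Icc (5 * Real.pi / 8) (7 * Real.pi / 8))
    (w : ℂ) (h : (k * (1 + w) / (1 - w)).re ≤ 0) :
    ‖w‖ ≤ Real.tan (3 * Real.pi / 8) + 1 / Real.cos (3 * Real.pi / 8) := by
  have hcos : 0 < cos (3 * π / 8) :=
    cos_pos_of_mem_Ioo ⟨by linarith [pi_pos], by linarith [pi_pos]⟩
  have hre : k.re < 0 := Complex.re_neg_of_pi_div_two_lt_arg (by linarith [harg.1, pi_pos])
  have him : |k.im| ≤ tan (3 * π / 8) * -k.re :=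
    Complex.abs_im_le_tan_mul_neg_re (by linarith [pi_pos]) (by linarith [harg.1])
  have hkey : k.re * (1 - ‖w‖ ^ 2) - 2 * k.im * w.im ≤ 0 := by
    rw [← Complex.re_mul_one_add_div_one_sub_mul_normSq]
    exact mul_nonpos_of_nonpos_of_nonneg h (Complex.normSq_nonneg _)
  have hw_im : |k.im * w.im| ≤ |k.im| * ‖w‖ := by
    rw [abs_mul]
    exact mul_le_mul_of_nonneg_left (Complex.abs_im_le_norm w) (abs_nonneg _)
  have hquad : -k.re * ‖w‖ ^ 2 ≤ -k.re * (2 * tan (3 * π / 8) * ‖w‖ + 1) := by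
    nlinarith [le_abs_self (k.im * w.im), norm_nonneg w]
  exact le_add_of_sq_le_two_mul_add_one (by positivity) (one_div_cos_sq hcos.ne')
    (le_of_mul_le_mul_left hquad (neg_pos.2 hre))

/-- Let k ∈ ℂ be nonzero with arg(k) ∈ [5π/8, 7π/8], and let w ∈ ℂ with
w ≠ 1 satisfy Re(k(1 + w)/(1 − w)) ≤ 0. Then |w| ≤ c₀, where
c₀ = tan(3π/8) + sec(3π/8). -/
theorem stmt_8 (k : ℂ) (hk : k ≠ 0)
    (harg : Complex.arg k ∈ Set.Icc (5 * Real.pi / 8) (7 * Real.pi / 8))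
    (w : ℂ) (hw : w ≠ 1) (h : (k * (1 + w) / (1 - w)).re ≤ 0) :
    ‖w‖ ≤ Real.tan (3 * Real.pi / 8) + 1 / Real.cos (3 * Real.pi / 8) :=
  stmt_8_general k harg w h
end

section
/- Let a < b be reals, C > 0, λ > 0, β > 0. Let γ, ρ : [a, b] → ℝ be continuous with γ(z) ≥ C and 0 ≤ ρ(z) ≤ (λ/C)γ(z) for all z, and let m : [a, b] → ℝ be a differentiable nonnegative function satisfying m'(z) − γ(z)m(z) ≥ −βρ(z) on [a, b] and m(b) ≤ 1. Then for every z ∈ [a, b], m(z) ≤ exp(−∫_z^b γ(s) ds) + βλ/C; in particular m(z) ≤ e^{−C(b−z)} + βλ/C. -/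
/-!
Put `k = βλ/C`. The hypotheses give `(m - k)' ≥ γ (m - k)`, so `(m - k) · exp (∫_z^b γ)` is
nondecreasing in `z`; comparing with its value `m b - k ≤ 1` at `b` yields
`m z - k ≤ exp (-∫_z^b γ)`, and `γ ≥ C` bounds the integral below by `C (b - z)`.
-/

open Set Real

theorem ContinuousOn.hasDerivAt_intervalIntegral_left {γ : ℝ → ℝ} {a b x : ℝ}
    (hγ : ContinuousOn γ (Icc a b)) (hx : x ∈ Ioo a b) :
    HasDerivAt (fun y => ∫ s in y..b, γ s) (-γ x) x := by
  have hγo : ContinuousOn γ (Ioo a b) := hγ.mono Ioo_subset_Icc_self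
  refine intervalIntegral.integral_hasDerivAt_left ?_
    (hγo.stronglyMeasurableAtFilter isOpen_Ioo x hx) (hγo.continuousAt (isOpen_Ioo.mem_nhds hx))
  exact (hγ.mono (Icc_subset_Icc hx.1.le le_rfl)).intervalIntegrable_of_Icc hx.2.le

theorem monotoneOn_mul_exp_intervalIntegral_of_deriv_ge {u u' γ : ℝ → ℝ} {a b : ℝ}
    (hγ : ContinuousOn γ (Icc a b))
    (hu : ∀ x ∈ Icc a b, HasDerivWithinAt u (u' x) (Icc a b) x)
    (hu' : ∀ x ∈ Ioo a b, γ x * u x ≤ u' x) :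
    MonotoneOn (fun x => u x * exp (∫ s in x..b, γ s)) (Icc a b) := by
  rcases lt_or_ge b a with hba | hab
  · exact fun x hx _ _ _ => absurd (hx.1.trans hx.2) hba.not_ge
  have hprimitive : ContinuousOn (fun x => ∫ s in x..b, γ s) (Icc a b) := by
    simpa [uIcc_of_le hab] using intervalIntegral.continuousOn_primitive_interval_left
      ((hγ.mono (uIcc_of_le hab).subset).integrableOn_compact isCompact_uIcc)
  have hu_cont : ContinuousOn u (Icc a b) := fun x hx => (hu x hx).continuousWithinAt
  refine monotoneOn_of_hasDerivWithinAt_nonneg (convex_Icc a b) (hu_cont.mul hprimitive.rexp)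
    (f' := fun x => exp (∫ s in x..b, γ s) * (u' x - γ x * u x)) (fun x hx => ?_)
    (fun x hx => ?_) <;> rw [interior_Icc] at hx
  · rw [interior_Icc]
    refine (((hu x (Ioo_subset_Icc_self hx)).mono Ioo_subset_Icc_self).mul
      (hγ.hasDerivAt_intervalIntegral_left hx).exp.hasDerivWithinAt).congr_deriv ?_
    ring
  · exact mul_nonneg (exp_pos _).le (sub_nonneg.2 (hu' x hx))

theorem le_mul_exp_neg_intervalIntegral_of_deriv_ge {u u' γ : ℝ → ℝ} {a b : ℝ} (hab : a ≤ b)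
    (hγ : ContinuousOn γ (Icc a b))
    (hu : ∀ x ∈ Icc a b, HasDerivWithinAt u (u' x) (Icc a b) x)
    (hu' : ∀ x ∈ Ioo a b, γ x * u x ≤ u' x) :
    u a ≤ u b * exp (-∫ s in a..b, γ s) := by
  have hmono := monotoneOn_mul_exp_intervalIntegral_of_deriv_ge hγ hu hu'
    (left_mem_Icc.2 hab) (right_mem_Icc.2 hab) hab
  simp only [intervalIntegral.integral_same, exp_zero, mul_one] at hmono
  calc u a = u a * exp (∫ s in a..b, γ s) * exp (-∫ s in a..b, γ s) := by
        rw [mul_assoc, ← exp_add, add_neg_cancel, exp_zero, mul_one]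
    _ ≤ u b * exp (-∫ s in a..b, γ s) := mul_le_mul_of_nonneg_right hmono (exp_pos _).le

theorem stmt_13_general (a b C lam β : ℝ) (hC : 0 < C) (hlam : 0 < lam)
    (hβ : 0 < β) (γ ρ m m' : ℝ → ℝ)
    (hγc : ContinuousOn γ (Set.Icc a b))
    (hγ : ∀ z ∈ Set.Icc a b, C ≤ γ z)
    (hρ : ∀ z ∈ Set.Icc a b, 0 ≤ ρ z ∧ ρ z ≤ (lam / C) * γ z)
    (hm : ∀ z ∈ Set.Icc a b, HasDerivWithinAt m (m' z) (Set.Icc a b) z)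
    (hineq : ∀ z ∈ Set.Icc a b, m' z - γ z * m z ≥ -β * ρ z)
    (hmb : m b ≤ 1) :
    ∀ z ∈ Set.Icc a b,
      m z ≤ Real.exp (-∫ s in z..b, γ s) + β * lam / C ∧
      m z ≤ Real.exp (-C * (b - z)) + β * lam / C := by
  intro z hz
  set k := β * lam / C
  have hsub : Icc z b ⊆ Icc a b := Icc_subset_Icc_left hz.1
  have hderiv : ∀ x ∈ Ioo z b, γ x * (m x - k) ≤ m' x := by
    intro x hx
    have hx' : x ∈ Icc a b := hsub (Ioo_subset_Icc_self hx)
    have hβρ : β * ρ x ≤ γ x * k :=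
      calc β * ρ x ≤ β * (lam / C * γ x) := mul_le_mul_of_nonneg_left (hρ x hx').2 hβ.le
        _ = γ x * k := by ring
    linarith [hineq x hx']
  have hgronwall := le_mul_exp_neg_intervalIntegral_of_deriv_ge hz.2 (hγc.mono hsub)
    (fun x hx => ((hm x (hsub hx)).mono hsub).sub_const k) hderiv
  have hfirst : m z ≤ exp (-∫ s in z..b, γ s) + k := by
    have hk : 0 ≤ k := by positivity
    have : (m b - k) * exp (-∫ s in z..b, γ s) ≤ exp (-∫ s in z..b, γ s) :=
      mul_le_of_le_one_left (exp_pos _).le (by linarith)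
    linarith
  refine ⟨hfirst, hfirst.trans (add_le_add_left (exp_le_exp.2 ?_) k)⟩
  have hint := intervalIntegral.integral_mono_on hz.2
    (intervalIntegrable_const (μ := MeasureTheory.volume))
    ((hγc.mono hsub).intervalIntegrable_of_Icc hz.2) fun x hx => hγ x (hsub hx)
  rw [intervalIntegral.integral_const, smul_eq_mul] at hint
  linarith

/-- Let a < b, C > 0, λ > 0, β > 0. Let γ, ρ : [a,b] → ℝ be continuous
with γ ≥ C and 0 ≤ ρ ≤ (λ/C)γ, and let m be a differentiable nonnegative function on
[a,b] with m' − γm ≥ −βρ and m(b) ≤ 1. Then for every z ∈ [a,b],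
m(z) ≤ exp(−∫_z^b γ) + βλ/C; in particular m(z) ≤ e^{−C(b−z)} + βλ/C. -/
theorem stmt_13 (a b C lam β : ℝ) (hab : a < b) (hC : 0 < C) (hlam : 0 < lam)
    (hβ : 0 < β) (γ ρ m m' : ℝ → ℝ)
    (hγc : ContinuousOn γ (Set.Icc a b)) (hρc : ContinuousOn ρ (Set.Icc a b))
    (hγ : ∀ z ∈ Set.Icc a b, C ≤ γ z)
    (hρ : ∀ z ∈ Set.Icc a b, 0 ≤ ρ z ∧ ρ z ≤ (lam / C) * γ z)
    (hm : ∀ z ∈ Set.Icc a b, HasDerivWithinAt m (m' z) (Set.Icc a b) z)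
    (hm0 : ∀ z ∈ Set.Icc a b, 0 ≤ m z)
    (hineq : ∀ z ∈ Set.Icc a b, m' z - γ z * m z ≥ -β * ρ z)
    (hmb : m b ≤ 1) :
    ∀ z ∈ Set.Icc a b,
      m z ≤ Real.exp (-∫ s in z..b, γ s) + β * lam / C ∧
      m z ≤ Real.exp (-C * (b - z)) + β * lam / C :=
  stmt_13_general a b C lam β hC hlam hβ γ ρ m m' hγc hγ hρ hm hineq hmb
end
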